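/- arXiv:math/0602324 — 3 statements merged into one kernel-verified Lean document; each statement's English description precedes it below -/
import Mathlib

section
/- If Ω₁ = (1/h)R₁dt and Ω₂ = (1/h)R₂dt are adapted families of connection 1-forms which are both h⁻¹-linear and which are adapted gauge equivalent, then Ω₁ = Ω₂ (i.e. R₁ = R₂); moreover the only adapted gauge transformation U with U*Ω₁ = Ω₂ is U = I. -/
open MvPolynomial Matrix Finset

noncomputable section

/-- `ℂ[q,h]`: variable `0` is `q`, variable `1` is `h`. -/
abbrev PQH : Type := MvPolynomial (Fin 2) ℂ

/-- weights: `deg q = 2(N-k)`, `deg h = 2`. -/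
def wt (N k : ℕ) : Fin 2 → ℤ := ![2 * ((N : ℤ) - (k : ℤ)), 2]

/-- weighted-homogeneous of degree `d`. -/
def IsHom (N k : ℕ) (p : PQH) (d : ℤ) : Prop :=
  p.IsWeightedHomogeneous (wt N k) d

/-- substitution `q = 0`. -/
def q0 : PQH →ₐ[ℂ] PQH := aeval ![0, X 1]

abbrev Mat (N : ℕ) := Matrix (Fin (N - 1)) (Fin (N - 1)) PQH

/-- the matrix `I₋₁`: entries `(i+1, i)` equal to `1`, all other entries `0`. -/
def Im1 (N : ℕ) : Mat N := fun i j => if (i : ℕ) = (j : ℕ) + 1 then 1 else 0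

/-- adapted gauge transformation: entries weighted-homogeneous of degree `2(j-i)`,
and `U(0,h) = I`. -/
structure IsAdaptedGauge (N k : ℕ) (U : Mat N) : Prop where
  homog : ∀ i j, IsHom N k (U i j) (2 * ((j : ℤ) - (i : ℤ)))
  init : U.map ⇑q0 = 1

/-- adapted family of connection 1-forms `Ω = (1/h) R dt`, as a condition on `R`:
entries weighted-homogeneous of degree `2(j-i)+2`, `R(0,h) = I₋₁`, and all
`(i+1,i)` entries equal to `1`. -/
structure IsAdaptedConn (N k : ℕ) (R : Mat N) : Prop where
  homog : ∀ i j, IsHom N k (R i j) (2 * ((j : ℤ) - (i : ℤ)) + 2)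
  init : R.map ⇑q0 = Im1 N
  subdiag : ∀ i j : Fin (N - 1), (i : ℕ) = (j : ℕ) + 1 → R i j = 1

/-- `h⁻¹`-linear: the variable `h` does not occur in the entries of `R`. -/
def IsHinvLinear (N : ℕ) (R : Mat N) : Prop :=
  ∀ i j, ∀ m ∈ (R i j).support, m 1 = 0

/-- the gauge action `U*Ω` on the level of the matrix `R`:
`R' = U⁻¹ R U + h q U⁻¹ (∂U/∂q)`. -/
def gaugeAct (N : ℕ) (U R : Mat N) : Mat N :=
  U⁻¹ * R * U + (X 1 * X 0 : PQH) • (U⁻¹ * U.map (fun p => pderiv 0 p))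

/-- the derivation `D = q d/dq` of `ℂ[q,h]`, as a `ℂ`-linear endomorphism. -/
def Dop : Module.End ℂ PQH := (LinearMap.mulLeft ℂ (X 0 : PQH)) ∘ₗ (pderiv 0).toLinearMap

/-- multiplication by a polynomial, as a differential operator. -/
def mulOp (c : PQH) : Module.End ℂ PQH := LinearMap.mulLeft ℂ c

/-- the operator `hD`. -/
def hD : Module.End ℂ PQH := mulOp (X 1) * Dop

/-- the operators attached to an adapted family `Ω = (1/h) R dt`: `P₀ = 1`,
`P_{β+1} = (hD)∘P_β − Σ_{α=0}^{β} r_{α,β}·P_α`; `Pops N R (N-1)` is the reduced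
operator of `Ω`. -/
def Pops (N : ℕ) (R : Mat N) : ℕ → Module.End ℂ PQH
  | 0 => 1
  | β + 1 =>
      hD * Pops N R β -
        ∑ α : Fin (β + 1),
          (if h : (α : ℕ) < N - 1 ∧ β < N - 1 then
            mulOp (R ⟨α, h.1⟩ ⟨β, h.2⟩) * Pops N R α
          else 0)
  termination_by β => β
  decreasing_by
  · exact Nat.lt_succ_self β
  · exact α.is_lt

/-- `σ_{β,γ}` attached to an adapted family `R`:
`σ_{0,0} = 1`, `σ_{β+1,γ} = σ_{β,γ−1} + q h ∂σ_{β,γ}/∂q − Σ_{α=γ}^{β} r_{α,β} σ_{α,γ}`,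
with the conventions `σ_{β,γ} = 0` for `γ < 0` or `γ > β` (which this definition obeys). -/
def sigmaC (N : ℕ) (R : Mat N) : ℕ → ℕ → PQH
  | 0, 0 => 1
  | 0, _ + 1 => 0
  | β + 1, γ =>
      (match γ with
        | 0 => 0
        | γ' + 1 => sigmaC N R β γ') +
      X 0 * X 1 * pderiv 0 (sigmaC N R β γ) -
      ∑ α : Fin (β + 1),
        (if h : γ ≤ (α : ℕ) ∧ (α : ℕ) < N - 1 ∧ β < N - 1 then
          R ⟨α, h.2.1⟩ ⟨β, h.2.2⟩ * sigmaC N R α γ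
        else 0)
  termination_by β _ => β
  decreasing_by
  · exact Nat.lt_succ_self β
  · exact Nat.lt_succ_self β
  · exact α.is_lt

/-- the integers `λᵢᵏ` defined by `k ∏_{j=1}^{k-1} (kX+j) = Σᵢ λᵢᵏ Xⁱ`. -/
def lam (k i : ℕ) : ℤ :=
  ((k : Polynomial ℤ) *
    ∏ j ∈ Finset.Icc 1 (k - 1),
      ((k : Polynomial ℤ) * Polynomial.X + (j : Polynomial ℤ))).coeff i

/-- the Picard–Fuchs operator
`P^{N,k} = (hD)^{N−1} − q (λ_{k−1}(hD)^{k−1} + λ_{k−2} h (hD)^{k−2} + ⋯ + λ₀ h^{k−1})`. -/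
def PNK (N k : ℕ) : Module.End ℂ PQH :=
  hD ^ (N - 1) -
    ∑ i ∈ Finset.range k,
      mulOp (C ((lam k i : ℤ) : ℂ) * X 0 * X 1 ^ (k - 1 - i)) * hD ^ i

/-! ### Auxiliary lemmas for the uniqueness theorem -/

lemma weight_wt (N k : ℕ) (d : Fin 2 →₀ ℕ) :
    Finsupp.weight (wt N k) d = (d 0 : ℤ) * (2 * ((N:ℤ) - k)) + (d 1 : ℤ) * 2 := by
  rw [Finsupp.weight_apply, Finsupp.sum_fintype]
  · simp [Fin.sum_univ_two, wt, nsmul_eq_mul]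
  · intro i; exact zero_smul _ _

lemma hom0_eq_C {N k : ℕ} (hNk : k < N) {p : PQH} (hp : IsHom N k p 0) :
    p = C (coeff 0 p) := by
  ext d
  by_cases hd : d = 0
  · subst hd; simp
  · rw [coeff_C, if_neg (Ne.symm hd)]
    apply hp.coeff_eq_zero
    rw [weight_wt]
    have h1 : (1:ℤ) ≤ (N:ℤ) - k := by omega
    have ha : (0:ℤ) ≤ (d 0 : ℤ) := Int.natCast_nonneg _
    have hb : (0:ℤ) ≤ (d 1 : ℤ) := Int.natCast_nonneg _
    intro hcontra
    have hz : (d 0 : ℤ) = 0 ∧ (d 1 : ℤ) = 0 := by constructor <;> nlinarith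
    apply hd
    ext i
    fin_cases i
    · simpa using hz.1
    · simpa using hz.2

lemma coeff_q0 (p : PQH) : ∀ (s : Fin 2 →₀ ℕ), s 0 = 0 → coeff s (q0 p) = coeff s p := by
  induction p using MvPolynomial.induction_on with
  | C a => intro s _; rw [show q0 (C a) = C a from aeval_C _ _]
  | add p q hp hq => intro s hs; simp only [map_add, coeff_add, hp s hs, hq s hs]
  | mul_X p i hp =>
    intro s hs
    have hi : i = 0 ∨ i = 1 := by omega
    rcases hi with rfl | rfl
    · have h2 : q0 (p * X 0) = 0 := by
        rw [_root_.map_mul, show q0 (X 0) = 0 by simp [q0], mul_zero]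
      rw [h2, coeff_zero, coeff_mul_X']
      rw [if_neg (by simp [Finsupp.mem_support_iff, hs])]
    · have h2 : q0 (p * X 1) = q0 p * X 1 := by
        rw [_root_.map_mul, show q0 (X 1) = X 1 by simp [q0]]
      rw [h2, coeff_mul_X', coeff_mul_X']
      by_cases h1 : (1 : Fin 2) ∈ s.support
      · rw [if_pos h1, if_pos h1]
        exact hp _ (by simp [Finsupp.tsub_apply, hs])
      · rw [if_neg h1, if_neg h1]

lemma coeff_pderiv0 (p : PQH) : ∀ (s : Fin 2 →₀ ℕ),
    coeff s (pderiv 0 p) = ((s 0 : ℂ) + 1) * coeff (s + Finsupp.single 0 1) p := by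
  induction p using MvPolynomial.induction_on' with
  | monomial u a =>
    intro s
    rw [pderiv_monomial, coeff_monomial, coeff_monomial]
    by_cases h : u = s + Finsupp.single 0 1
    · have hu0 : u 0 = s 0 + 1 := by simp [h]
      have hsub : u - Finsupp.single 0 1 = s := by
        ext i
        have := DFunLike.congr_fun h i
        simp only [Finsupp.add_apply] at this
        simp only [Finsupp.tsub_apply, this]
        omega
      rw [if_pos hsub, if_pos h, hu0]
      push_cast; ring
    · rw [if_neg h]
      split_ifs with h2
      · by_cases hu0 : u 0 = 0
        · simp [hu0]
        · exfalso
          apply h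
          ext i
          have hti := DFunLike.congr_fun h2 i
          simp only [Finsupp.tsub_apply] at hti
          simp only [Finsupp.add_apply]
          by_cases hi : i = 0
          · subst hi
            simp only [Finsupp.single_eq_same] at hti ⊢
            omega
          · simp only [Finsupp.single_apply, if_neg (Ne.symm hi)] at hti ⊢
            omega
      · ring
  | add p q hp hq =>
    intro s
    simp only [map_add, coeff_add, hp s, hq s]
    ring

lemma key_coeff (p : PQH) (s : Fin 2 →₀ ℕ) (hs : s 0 ≠ 0) :
    coeff (s + Finsupp.single 1 1) (X 1 * X 0 * pderiv 0 p) = (s 0 : ℂ) * coeff s p := by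
  set u : Fin 2 →₀ ℕ := s - Finsupp.single 0 1 with hudef
  have hu : u + Finsupp.single 0 1 = s := by
    ext i
    simp only [hudef, Finsupp.add_apply, Finsupp.tsub_apply]
    rcases eq_or_ne (0 : Fin 2) i with rfl | hi
    · simp only [Finsupp.single_eq_same]
      have : s 0 ≠ 0 := hs
      omega
    · rw [Finsupp.single_apply, if_neg hi]
      omega
  have hshift : (X 1 * X 0 * pderiv 0 p : PQH) = (pderiv 0 p * X 0) * X 1 := by ring
  have h0 : (u 0 : ℂ) + 1 = (s 0 : ℂ) := by
    have := DFunLike.congr_fun hu 0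
    simp only [Finsupp.add_apply, Finsupp.single_eq_same] at this
    push_cast [← this]; ring
  calc coeff (s + Finsupp.single 1 1) (X 1 * X 0 * pderiv 0 p)
      = coeff ((u + Finsupp.single 0 1) + Finsupp.single 1 1)
          ((pderiv 0 p * X 0) * X 1) := by rw [hu, hshift]
    _ = coeff (u + Finsupp.single 0 1) (pderiv 0 p * X 0) := coeff_mul_X _ _ _
    _ = coeff u (pderiv 0 p) := coeff_mul_X _ _ _
    _ = ((u 0 : ℂ) + 1) * coeff (u + Finsupp.single 0 1) p := coeff_pderiv0 p _
    _ = (s 0 : ℂ) * coeff s p := by rw [hu, h0]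

lemma det_gauge_eq_one {N k : ℕ} (hNk : k < N) {U : Mat N} (hU : IsAdaptedGauge N k U) :
    U.det = 1 := by
  have hneg : ∀ (p : PQH) (n : ℤ), p.IsWeightedHomogeneous (wt N k) n →
      (-p).IsWeightedHomogeneous (wt N k) n := by
    intro p n h d hd
    exact h (by rwa [coeff_neg, neg_ne_zero] at hd)
  have hhom : IsHom N k U.det 0 := by
    rw [Matrix.det_apply]
    apply IsWeightedHomogeneous.sum
    intro σ _
    have hsum : (∑ i : Fin (N-1), 2 * ((i : ℤ) - ((σ i : Fin (N-1)) : ℤ))) = 0 := by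
      have hc : ∑ i : Fin (N-1), ((σ i : Fin (N-1)) : ℤ) = ∑ i : Fin (N-1), (i : ℤ) :=
        Equiv.sum_comp σ (fun i => (i : ℤ))
      have hterm : ∀ i : Fin (N-1), 2 * ((i : ℤ) - ((σ i : Fin (N-1)) : ℤ))
          = 2 * (i:ℤ) - 2 * ((σ i : Fin (N-1)) : ℤ) := fun i => by ring
      rw [Finset.sum_congr rfl fun i _ => hterm i]
      rw [Finset.sum_sub_distrib, ← Finset.mul_sum, ← Finset.mul_sum, hc, sub_self]
    have hprod := IsWeightedHomogeneous.prod (univ : Finset (Fin (N-1)))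
      (fun i => U (σ i) i) (fun i => 2 * ((i : ℤ) - ((σ i : Fin (N-1)) : ℤ)))
      (w := wt N k) (fun i _ => hU.homog (σ i) i)
    rw [hsum] at hprod
    rcases Int.units_eq_one_or (Equiv.Perm.sign σ) with h | h <;> rw [h]
    · simpa using hprod
    · have hsmul : ((-1 : ℤˣ) • ∏ i, U (σ i) i) = -(∏ i, U (σ i) i) := by simp
      rw [hsmul]
      exact hneg _ _ hprod
  have hC : U.det = C (coeff 0 U.det) := hom0_eq_C hNk hhom
  have h1 : q0 U.det = (U.map ⇑q0).det := AlgHom.map_det q0 U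
  rw [hU.init, det_one] at h1
  have h3 : q0 (C (coeff 0 U.det)) = C (coeff 0 U.det) := aeval_C _ _
  have h2 : q0 U.det = U.det := by rw [hC]; exact h3
  rw [← h2, h1]

lemma gaugeAct_one (N : ℕ) (R : Mat N) : gaugeAct N 1 R = R := by
  unfold gaugeAct
  have hm : (1 : Mat N).map (fun p => pderiv 0 p) = 0 := by
    ext i j
    simp only [Matrix.map_apply, Matrix.one_apply, Matrix.zero_apply, apply_ite (⇑(pderiv 0)),
      map_zero]
    split
    · rw [show (1 : PQH) = C 1 by simp, pderiv_C]
    · rfl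
  have hio : (1 : Mat N)⁻¹ = 1 := Matrix.inv_eq_left_inv (by rw [Matrix.one_mul])
  rw [hio, Matrix.one_mul, Matrix.mul_one, hm, Matrix.mul_zero, smul_zero, add_zero]

lemma gauge_eq_one {N k : ℕ} (hNk : k < N) {R₁ R₂ : Mat N}
    (hl₁ : IsHinvLinear N R₁) (hl₂ : IsHinvLinear N R₂)
    (U : Mat N) (hU : IsAdaptedGauge N k U) (hact : gaugeAct N U R₁ = R₂) : U = 1 := by
  classical
  have hdet : U.det = 1 := det_gauge_eq_one hNk hU
  have hunit : IsUnit U.det := by rw [hdet]; exact isUnit_one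
  have hinv : U * U⁻¹ = 1 := Matrix.mul_nonsing_inv U hunit
  have Meq : U * R₂ = R₁ * U + ((X 1 * X 0 : PQH) • (U.map fun p => pderiv 0 p)) := by
    rw [← hact]
    show U * (U⁻¹ * R₁ * U + (X 1 * X 0 : PQH) • (U⁻¹ * U.map fun p => pderiv 0 p)) = _
    simp only [Matrix.mul_add, Matrix.mul_smul, ← Matrix.mul_assoc, hinv, Matrix.one_mul]
  have eqE : ∀ i j, ∑ l, U i l * R₂ l j
      = (∑ l, R₁ i l * U l j) + X 1 * X 0 * pderiv 0 (U i j) := by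
    intro i j
    have h := congrFun (congrFun Meq i) j
    simpa [Matrix.mul_apply, Matrix.add_apply, Matrix.smul_apply, Matrix.map_apply,
      smul_eq_mul] using h
  have hq0 : ∀ i j, q0 (U i j) = (1 : Mat N) i j := by
    intro i j
    have h := congrFun (congrFun hU.init i) j
    simpa [Matrix.map_apply] using h
  have hone : ∀ (i j : Fin (N-1)) (s : Fin 2 →₀ ℕ), s ≠ 0 → coeff s ((1 : Mat N) i j) = 0 := by
    intro i j s hs
    by_cases h : i = j <;> simp [Matrix.one_apply, h, MvPolynomial.coeff_one, eq_comm, hs]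
  set D : ℕ := (univ : Finset (Fin (N-1) × Fin (N-1))).sup
      (fun p => (U p.1 p.2).totalDegree) + 1 with hD
  have base : ∀ (i j : Fin (N-1)) (s : Fin 2 →₀ ℕ), D ≤ s 1 →
      coeff s (U i j) = coeff s ((1 : Mat N) i j) := by
    intro i j s h
    have hs0 : s ≠ 0 := by
      intro h0
      rw [h0] at h
      simp [hD] at h
    rw [hone i j s hs0]
    by_contra h2
    have hmem : s ∈ (U i j).support := mem_support_iff.mpr h2
    have h3 : (s.sum fun _ e => e) ≤ (U i j).totalDegree := MvPolynomial.le_totalDegree hmem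
    have h4 : s 1 ≤ s.sum fun _ e => e := by
      rcases eq_or_ne (s 1) 0 with h5 | h5
      · omega
      · exact Finset.single_le_sum (f := fun a => s a) (fun _ _ => Nat.zero_le _)
          (Finsupp.mem_support_iff.mpr h5)
    have h6 : (U i j).totalDegree ≤ (univ : Finset (Fin (N-1) × Fin (N-1))).sup
        (fun p => (U p.1 p.2).totalDegree) :=
      Finset.le_sup (f := fun p : Fin (N-1) × Fin (N-1) => (U p.1 p.2).totalDegree)
        (mem_univ (i, j))
    omega
  have main : ∀ (m : ℕ) (i j : Fin (N-1)) (s : Fin 2 →₀ ℕ), D ≤ m + s 1 →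
      coeff s (U i j) = coeff s ((1 : Mat N) i j) := by
    intro m
    induction m with
    | zero => intro i j s hs; exact base i j s (by omega)
    | succ m IH =>
      intro i j s hs
      by_cases hs0 : s 0 = 0
      · rw [← coeff_q0 (U i j) s hs0, hq0 i j]
      · have hone' : coeff s ((1 : Mat N) i j) = 0 := by
          apply hone i j s
          intro h0
          rw [h0] at hs0
          exact hs0 rfl
        rw [hone']
        set t : Fin 2 →₀ ℕ := s + Finsupp.single 1 1 with htdef
        have ht1 : t 1 = s 1 + 1 := by simp [htdef]
        have hcoeffEq := congrArg (coeff t) (eqE i j)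
        have hL : coeff t (∑ l, U i l * R₂ l j) = 0 := by
          rw [coeff_sum]
          apply Finset.sum_eq_zero
          intro l _
          rw [coeff_mul]
          apply Finset.sum_eq_zero
          rintro ⟨a, b⟩ hab
          rcases eq_or_ne (coeff b (R₂ l j)) 0 with h0 | h0
          · rw [h0, mul_zero]
          · have hb1 : b 1 = 0 := hl₂ l j b (mem_support_iff.mpr h0)
            have hab' : a + b = t := Finset.HasAntidiagonal.mem_antidiagonal.mp hab
            have ha1 : a 1 = s 1 + 1 := by
              have := DFunLike.congr_fun hab' 1
              simp only [Finsupp.add_apply] at this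
              omega
            have hIH := IH i l a (by omega)
            have ha0 : a ≠ 0 := by
              intro h0'
              rw [h0'] at ha1
              simp at ha1
            rw [hIH, hone i l a ha0, zero_mul]
        have hRz : coeff t (∑ l, R₁ i l * U l j) = 0 := by
          rw [coeff_sum]
          apply Finset.sum_eq_zero
          intro l _
          rw [coeff_mul]
          apply Finset.sum_eq_zero
          rintro ⟨a, b⟩ hab
          rcases eq_or_ne (coeff a (R₁ i l)) 0 with h0 | h0
          · rw [h0, zero_mul]
          · have ha1 : a 1 = 0 := hl₁ i l a (mem_support_iff.mpr h0)
            have hab' : a + b = t := Finset.HasAntidiagonal.mem_antidiagonal.mp hab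
            have hb1 : b 1 = s 1 + 1 := by
              have := DFunLike.congr_fun hab' 1
              simp only [Finsupp.add_apply] at this
              omega
            have hIH := IH l j b (by omega)
            have hb0 : b ≠ 0 := by
              intro h0'
              rw [h0'] at hb1
              simp at hb1
            rw [hIH, hone l j b hb0, mul_zero]
        have hder : coeff t (X 1 * X 0 * pderiv 0 (U i j)) = (s 0 : ℂ) * coeff s (U i j) :=
          key_coeff _ s hs0
        rw [hL, coeff_add, hRz, hder, zero_add] at hcoeffEq
        have hcast : (s 0 : ℂ) ≠ 0 := Nat.cast_ne_zero.mpr hs0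
        exact (mul_eq_zero.mp hcoeffEq.symm).resolve_left hcast
  ext i j s
  exact main D i j s (by omega)

/-- **Theorem (Uniqueness, thm:uniqueness).** If `Ω₁ = (1/h)R₁dt` and `Ω₂ = (1/h)R₂dt`
are adapted families of connection 1-forms which are `h⁻¹`-linear and adapted gauge
equivalent, then `Ω₁ = Ω₂`; moreover the only adapted gauge transformation `U` with
`U*Ω₁ = Ω₂` is `U = I`. -/
theorem uniqueness_of_hinv_linear_adapted_connection
    (N k : ℕ) (hk : 2 ≤ k) (hNk : k < N)
    (R₁ R₂ : Mat N)
    (h₁ : IsAdaptedConn N k R₁) (h₂ : IsAdaptedConn N k R₂)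
    (hl₁ : IsHinvLinear N R₁) (hl₂ : IsHinvLinear N R₂)
    (hequiv : ∃ U : Mat N, IsAdaptedGauge N k U ∧ gaugeAct N U R₁ = R₂) :
    R₁ = R₂ ∧ ∀ U : Mat N, IsAdaptedGauge N k U → gaugeAct N U R₁ = R₂ → U = 1 := by
  constructor
  · obtain ⟨U, hU, hact⟩ := hequiv
    have hU1 : U = 1 := gauge_eq_one hNk hl₁ hl₂ U hU hact
    rw [hU1, gaugeAct_one] at hact
    exact hact
  · intro U hU hact
    exact gauge_eq_one hNk hl₁ hl₂ U hU hact

end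
end

section
/- Let U be an adapted gauge transformation and let Ω = (1/h)R dt be an adapted family of connection 1-forms. Then R′ := U⁻¹RU + h q U⁻¹(∂U/∂q) is again an (N−1)×(N−1) matrix over ℂ[q,h] whose (i,j) entry is weighted-homogeneous of degree 2(j−i)+2 for all i,j, with R′(0,h) = I₋₁ and every (i+1,i) entry of R′ equal to 1; that is, U*Ω = (1/h)R′dt is an adapted family of connection 1-forms, so the adapted gauge group acts on the space of adapted families. -/
open MvPolynomial Matrix Finset

noncomputable section

variable {N k : ℕ}

lemma wt_nonneg (hNk : k ≤ N) : ∀ s, 0 ≤ wt N k s := by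
  intro s
  fin_cases s <;> simp [wt] <;> omega

lemma weight_nonneg (hNk : k ≤ N) (m : Fin 2 →₀ ℕ) : 0 ≤ Finsupp.weight (wt N k) m := by
  rw [Finsupp.weight_apply, Finsupp.sum]
  refine Finset.sum_nonneg fun i _ => ?_
  have := wt_nonneg hNk i
  positivity

lemma IsHom.congr {p : PQH} {d d' : ℤ} (hp : IsHom N k p d) (h : d = d') : IsHom N k p d' :=
  h ▸ hp

lemma hom_neg_eq_zero (hNk : k ≤ N) {p : PQH} {d : ℤ} (hp : IsHom N k p d) (hd : d < 0) :
    p = 0 := by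
  by_contra h
  obtain ⟨m, hm⟩ := MvPolynomial.ne_zero_iff.mp h
  have := hp hm
  have := weight_nonneg hNk m
  omega

lemma hom_zero_eq_C (hNk : k < N) {p : PQH} (hp : IsHom N k p 0) :
    p = C (coeff 0 p) := by
  have key : ∀ m : Fin 2 →₀ ℕ, coeff m p ≠ 0 → m = 0 := by
    intro m hm
    have hw := hp hm
    ext s
    by_contra hs
    have h1 : wt N k s ≤ Finsupp.weight (wt N k) m :=
      Finsupp.le_weight_of_ne_zero (wt_nonneg hNk.le) (by simpa using hs)
    have h2 : 0 < wt N k s := by fin_cases s <;> simp [wt] <;> omega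
    omega
  apply MvPolynomial.ext
  intro m
  rw [coeff_C]
  split_ifs with h
  · rw [← h]
  · have := key m
    by_contra hc
    exact h ((this hc).symm)

lemma q0_hom_zero (hNk : k < N) {p : PQH} (hp : IsHom N k p 0) : q0 p = p := by
  rw [hom_zero_eq_C hNk hp]
  show q0 (C _) = C _
  rw [show (C (coeff 0 p) : PQH) = algebraMap ℂ PQH (coeff 0 p) from rfl, AlgHom.commutes]

lemma IsHom.pderiv0 {p : PQH} {d : ℤ} (hp : IsHom N k p d) :
    IsHom N k (pderiv 0 p) (d - wt N k 0) := by
  conv_lhs => rw [p.as_sum]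
  rw [map_sum]
  apply IsWeightedHomogeneous.sum
  intro m hm
  rw [pderiv_monomial]
  by_cases h0 : m 0 = 0
  · rw [h0, Nat.cast_zero, mul_zero, monomial_zero]
    exact isWeightedHomogeneous_zero ℂ _ _
  · apply isWeightedHomogeneous_monomial
    have hle : Finsupp.single (0 : Fin 2) 1 ≤ m :=
      Finsupp.single_le_iff.mpr (Nat.one_le_iff_ne_zero.mpr h0)
    have hsplit : m - Finsupp.single (0 : Fin 2) 1 + Finsupp.single (0 : Fin 2) 1 = m :=
      tsub_add_cancel_of_le hle
    have hw : Finsupp.weight (wt N k) (m - Finsupp.single (0 : Fin 2) 1)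
        + Finsupp.weight (wt N k) (Finsupp.single (0 : Fin 2) 1) = d := by
      rw [← map_add, hsplit]
      exact hp (mem_support_iff.mp hm)
    have hsingle : Finsupp.weight (wt N k) (Finsupp.single (0 : Fin 2) 1) = wt N k 0 := by
      rw [Finsupp.weight_apply, Finsupp.sum_single_index] <;> simp
    omega


def MatHom (N k : ℕ) (c : ℤ) (A : Mat N) : Prop :=
  ∀ i j, IsHom N k (A i j) (2 * ((j : ℤ) - (i : ℤ)) + c)

lemma MatHom.mul {a b : ℤ} {A B : Mat N} (hA : MatHom N k a A) (hB : MatHom N k b B) :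
    MatHom N k (a + b) (A * B) := by
  intro i j
  rw [Matrix.mul_apply]
  apply IsWeightedHomogeneous.sum
  intro l _
  exact IsHom.congr ((hA i l).mul (hB l j)) (by ring)

lemma MatHom.one : MatHom N k 0 (1 : Mat N) := by
  intro i j
  rw [Matrix.one_apply]
  split_ifs with h
  · subst h
    exact IsHom.congr (isWeightedHomogeneous_one ℂ _) (by ring)
  · exact isWeightedHomogeneous_zero ℂ _ _

lemma MatHom.pow {A : Mat N} (hA : MatHom N k 0 A) (m : ℕ) : MatHom N k 0 (A ^ m) := by
  induction m with
  | zero => simpa using MatHom.one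
  | succ m ih => rw [pow_succ]; simpa using ih.mul hA

lemma MatHom.neg {a : ℤ} {A : Mat N} (hA : MatHom N k a A) : MatHom N k a (-A) := by
  intro i j
  show IsWeightedHomogeneous _ (-(A i j)) _
  exact (weightedHomogeneousSubmodule ℂ (wt N k) _).neg_mem (hA i j)

lemma MatHom.add {a : ℤ} {A B : Mat N} (hA : MatHom N k a A) (hB : MatHom N k a B) :
    MatHom N k a (A + B) := fun i j => (hA i j).add (hB i j)

/-- strictly-upper-triangular powers vanish below the shifted diagonal -/
lemma sut_pow {A : Mat N} (hA : ∀ i j : Fin (N - 1), (j : ℕ) ≤ (i : ℕ) → A i j = 0)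
    (m : ℕ) : ∀ i j : Fin (N - 1), (j : ℕ) < (i : ℕ) + m → (A ^ m) i j = 0 := by
  induction m with
  | zero =>
    intro i j hij
    rw [pow_zero, Matrix.one_apply_ne]
    intro h; subst h; omega
  | succ m ih =>
    intro i j hij
    rw [pow_succ', Matrix.mul_apply]
    apply Finset.sum_eq_zero
    intro l _
    by_cases h : (l : ℕ) ≤ (i : ℕ)
    · rw [hA i l h, zero_mul]
    · rw [ih l j (by omega), mul_zero]

lemma sut_pow_card {A : Mat N} (hA : ∀ i j : Fin (N - 1), (j : ℕ) ≤ (i : ℕ) → A i j = 0) :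
    A ^ (N - 1) = 0 := by
  ext i j
  rw [sut_pow hA (N - 1) i j (by omega)]
  rfl


lemma q0_X0 : q0 (X 0) = 0 := by simp [q0]
lemma q0_X1 : q0 (X 1) = X 1 := by simp [q0]


/-- **The adapted gauge group acts on the space of adapted families.** If `U` is an
adapted gauge transformation and `Ω = (1/h)R dt` is an adapted family of connection
1-forms, then `R' = U⁻¹RU + hq U⁻¹(∂U/∂q)` again defines an adapted family of
connection 1-forms `U*Ω = (1/h)R'dt`. -/
theorem gauge_action_preserves_adapted
    (N k : ℕ) (hk : 2 ≤ k) (hNk : k < N)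
    (U R : Mat N)
    (hU : IsAdaptedGauge N k U) (hR : IsAdaptedConn N k R) :
    IsAdaptedConn N k (gaugeAct N U R) := by
  obtain ⟨hUhom, hUinit⟩ := hU
  obtain ⟨hRhom, hRinit, hRsub⟩ := hR
  -- diagonal of U is 1, below-diagonal is 0
  have hUdiag : ∀ i, U i i = 1 := by
    intro i
    have h0 : IsHom N k (U i i) 0 := IsHom.congr (hUhom i i) (by ring)
    have h2 : q0 (U i i) = 1 := by
      have h3 := congrFun (congrFun hUinit i) i
      simpa [Matrix.map_apply, Matrix.one_apply] using h3
    rw [← q0_hom_zero hNk h0, h2]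
  have hUbelow : ∀ i j : Fin (N - 1), (j : ℕ) < (i : ℕ) → U i j = 0 := by
    intro i j h
    refine hom_neg_eq_zero hNk.le (hUhom i j) ?_
    have : (j : ℤ) < (i : ℤ) := by exact_mod_cast h
    omega
  have hNlow : ∀ i j : Fin (N - 1), (j : ℕ) ≤ (i : ℕ) → (U - 1) i j = 0 := by
    intro i j h
    rcases eq_or_lt_of_le h with h | h
    · have : j = i := Fin.ext h
      subst this
      simp [hUdiag j]
    · have : i ≠ j := by intro hc; subst hc; omega
      simp [Matrix.one_apply_ne' (Ne.symm this) , hUbelow i j h, Matrix.sub_apply]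
  have hUhom' : MatHom N k 0 U := fun i j => IsHom.congr (hUhom i j) (by ring)
  have hNhom : MatHom N k 0 (U - 1) := by
    intro i j
    show IsWeightedHomogeneous _ (U i j - (1 : Mat N) i j) _
    exact (weightedHomogeneousSubmodule ℂ (wt N k) _).sub_mem
      (IsHom.congr (hUhom i j) (by ring)) (MatHom.one i j)
  set n := N - 1 with hn
  set V : Mat N := ∑ m ∈ Finset.range n, (-(U - 1)) ^ m with hV
  have hVhom : MatHom N k 0 V := by
    intro i j
    rw [hV, Matrix.sum_apply]
    apply IsWeightedHomogeneous.sum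
    intro m _
    exact (hNhom.neg.pow m) i j
  have hnil : (U - 1) ^ n = 0 := sut_pow_card hNlow
  have hVU : V * U = 1 := by
    have hgeom := geom_sum_mul (-(U - 1)) n
    rw [neg_pow, hnil, mul_zero] at hgeom
    have : V * (-(U - 1) - 1) = -1 := by rw [hV, hgeom, zero_sub]
    have h2 : -(U - 1) - 1 = -U := by abel
    rw [h2, mul_neg] at this
    have := neg_injective this
    simpa using this
  have hUinv : U⁻¹ = V := Matrix.inv_eq_left_inv hVU
  have hgauge : gaugeAct N U R =
      V * R * U + (X 1 * X 0 : PQH) • (V * U.map (fun p => pderiv 0 p)) := by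
    rw [gaugeAct, hUinv]
  -- homogeneity
  have hU'hom : MatHom N k (-(wt N k 0)) (U.map fun p => pderiv 0 p) := by
    intro i j
    exact IsHom.congr (IsHom.pderiv0 (hUhom i j)) (by ring)
  have hRhom' : MatHom N k 2 R := fun i j => hRhom i j
  have hT1 : MatHom N k 2 (V * R * U) := by
    have := (hVhom.mul hRhom').mul hUhom'
    intro i j
    exact IsHom.congr (this i j) (by ring)
  have hT2 : MatHom N k 2 ((X 1 * X 0 : PQH) • (V * U.map fun p => pderiv 0 p)) := by
    have hW := hVhom.mul hU'hom
    intro i j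
    rw [Matrix.smul_apply, smul_eq_mul]
    have hc : IsWeightedHomogeneous (wt N k) (X 1 * X 0 : PQH) (wt N k 1 + wt N k 0) :=
      (isWeightedHomogeneous_X ℂ _ 1).mul (isWeightedHomogeneous_X ℂ _ 0)
    refine IsHom.congr (hc.mul (hW i j)) ?_
    have h1 : wt N k 1 = 2 := by simp [wt]
    rw [h1]; ring
  have hhom : MatHom N k 2 (gaugeAct N U R) := by
    rw [hgauge]; exact hT1.add hT2
  -- init
  have hmapV : V.map ⇑q0 = 1 := by
    have h1 : (V * U).map ⇑(q0 : PQH →+* PQH) = V.map ⇑(q0 : PQH →+* PQH) * U.map ⇑(q0 : PQH →+* PQH) :=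
      Matrix.map_mul
    rw [hVU] at h1
    have h2 : (1 : Mat N).map ⇑(q0 : PQH →+* PQH) = 1 :=
      Matrix.map_one _ (map_zero q0) (map_one q0)
    have h3 : U.map ⇑(q0 : PQH →+* PQH) = 1 := hUinit
    rw [h2, h3, mul_one] at h1
    exact h1.symm
  have hinit : (gaugeAct N U R).map ⇑q0 = Im1 N := by
    rw [hgauge]
    rw [Matrix.map_add ⇑q0 (map_add q0)]
    have hsm : ((X 1 * X 0 : PQH) • (V * U.map fun p => pderiv 0 p)).map ⇑q0 = 0 := by
      ext i j
      rw [Matrix.map_apply, Matrix.smul_apply, smul_eq_mul, _root_.map_mul, _root_.map_mul, q0_X0,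
        mul_zero, zero_mul]
      rfl
    have hm1 : (V * R * U).map ⇑(q0 : PQH →+* PQH)
        = V.map ⇑(q0 : PQH →+* PQH) * R.map ⇑(q0 : PQH →+* PQH) * U.map ⇑(q0 : PQH →+* PQH) := by
      rw [Matrix.map_mul, Matrix.map_mul]
    have h3 : U.map ⇑(q0 : PQH →+* PQH) = 1 := hUinit
    have h4 : R.map ⇑(q0 : PQH →+* PQH) = Im1 N := hRinit
    have h5 : V.map ⇑(q0 : PQH →+* PQH) = 1 := hmapV
    rw [show (V * R * U).map ⇑q0 = (V * R * U).map ⇑(q0 : PQH →+* PQH) from rfl, hm1,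
      h3, h4, h5, hsm, one_mul, mul_one, add_zero]
  refine ⟨fun i j => hhom i j, hinit, ?_⟩
  intro i j hij
  have h0 : IsHom N k ((gaugeAct N U R) i j) 0 := by
    refine IsHom.congr (hhom i j) ?_
    have : (i : ℤ) = (j : ℤ) + 1 := by exact_mod_cast hij
    omega
  have := congrFun (congrFun hinit i) j
  rw [Matrix.map_apply] at this
  rw [← q0_hom_zero hNk h0, this, Im1, if_pos hij]


end
end

section
/- Let Ω = (1/h)R dt be an adapted family of connection 1-forms with R = (r_{α,β}), and define σ_{β,γ} ∈ ℂ[q,h] by the stated recursion. Then for all 0 ≤ γ ≤ β ≤ N−1: σ_{β,β} = 1; σ_{β,γ} is weighted-homogeneous of degree 2(β−γ); and σ_{β,γ}(0,h) = 0 whenever β > γ. -/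
open MvPolynomial Matrix Finset

noncomputable section

/-- derivative of a weighted-homogeneous polynomial. -/
lemma pderiv_isHom {σ : Type*} [DecidableEq σ] {w : σ → ℤ} {p : MvPolynomial σ ℂ} {d : ℤ} (i : σ)
    (h : p.IsWeightedHomogeneous w d) :
    (pderiv i p).IsWeightedHomogeneous w (d - w i) := by
  conv_lhs => rw [p.as_sum]
  rw [map_sum]
  apply IsWeightedHomogeneous.sum
  intro s hs
  rw [pderiv_monomial]
  rcases Nat.eq_zero_or_pos (s i) with h0 | h0
  · simp only [h0, Nat.cast_zero, mul_zero, map_zero]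
    exact isWeightedHomogeneous_zero _ _ _
  · apply isWeightedHomogeneous_monomial
    have hle : Finsupp.single i 1 ≤ s := by
      rw [Finsupp.single_le_iff]; exact h0
    have hsum : (s - Finsupp.single i 1) + Finsupp.single i 1 = s := tsub_add_cancel_of_le hle
    have h1 := h (mem_support_iff.mp hs)
    have h2 : Finsupp.weight w ((s - Finsupp.single i 1) + Finsupp.single i 1) = d := by
      rw [hsum]; exact h1
    rw [map_add] at h2
    have h3 : Finsupp.weight w (Finsupp.single i 1) = w i := by
      simp [Finsupp.weight_apply, Finsupp.sum_single_index]
    omega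

lemma IsHom.sub {N k : ℕ} {p q : PQH} {d : ℤ} (hp : IsHom N k p d) (hq : IsHom N k q d) :
    IsHom N k (p - q) d := by
  rw [IsHom, ← mem_weightedHomogeneousSubmodule ℂ] at *
  exact Submodule.sub_mem _ hp hq

lemma IsHom.of_eq {N k : ℕ} {p : PQH} {d d' : ℤ} (hp : IsHom N k p d) (h : d = d') :
    IsHom N k p d' := h ▸ hp

lemma sigmaC_zero_zero (N : ℕ) (R : Mat N) : sigmaC N R 0 0 = 1 := by rw [sigmaC.eq_def]

lemma sigmaC_zero_succ (N : ℕ) (R : Mat N) (γ : ℕ) : sigmaC N R 0 (γ + 1) = 0 := by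
  rw [sigmaC.eq_def]

lemma sigmaC_succ_zero (N : ℕ) (R : Mat N) (β : ℕ) :
    sigmaC N R (β + 1) 0 =
      0 + X 0 * X 1 * pderiv 0 (sigmaC N R β 0) -
      ∑ α : Fin (β + 1),
        (if h : 0 ≤ (α : ℕ) ∧ (α : ℕ) < N - 1 ∧ β < N - 1 then
          R ⟨α, h.2.1⟩ ⟨β, h.2.2⟩ * sigmaC N R α 0
        else 0) := by
  rw [sigmaC.eq_def]

lemma sigmaC_succ_succ (N : ℕ) (R : Mat N) (β γ : ℕ) :
    sigmaC N R (β + 1) (γ + 1) =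
      sigmaC N R β γ + X 0 * X 1 * pderiv 0 (sigmaC N R β (γ + 1)) -
      ∑ α : Fin (β + 1),
        (if h : γ + 1 ≤ (α : ℕ) ∧ (α : ℕ) < N - 1 ∧ β < N - 1 then
          R ⟨α, h.2.1⟩ ⟨β, h.2.2⟩ * sigmaC N R α (γ + 1)
        else 0) := by
  rw [sigmaC.eq_def]

lemma sigma_gt (N : ℕ) (R : Mat N) : ∀ β γ : ℕ, β < γ → sigmaC N R β γ = 0 := by
  intro β
  induction β with
  | zero =>
    intro γ hγ
    obtain ⟨γ', rfl⟩ := Nat.exists_eq_add_of_lt hγ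
    simp [sigmaC_zero_succ]
  | succ β ih =>
    intro γ hγ
    obtain ⟨γ', rfl⟩ : ∃ γ', γ = γ' + 1 := ⟨γ - 1, by omega⟩
    rw [sigmaC_succ_succ]
    have h1 : sigmaC N R β γ' = 0 := ih γ' (by omega)
    have h2 : sigmaC N R β (γ' + 1) = 0 := ih (γ' + 1) (by omega)
    rw [h1, h2]
    have h3 : ∀ α : Fin (β + 1),
        (if h : γ' + 1 ≤ (α : ℕ) ∧ (α : ℕ) < N - 1 ∧ β < N - 1 then
          R ⟨α, h.2.1⟩ ⟨β, h.2.2⟩ * sigmaC N R α (γ' + 1)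
        else 0) = 0 := by
      intro α
      rw [dif_neg]
      rintro ⟨h4, -⟩
      have := α.is_lt
      omega
    rw [Finset.sum_congr rfl fun α _ => h3 α]
    simp

lemma sigma_diag (N : ℕ) (R : Mat N) : ∀ β : ℕ, sigmaC N R β β = 1 := by
  intro β
  induction β with
  | zero => exact sigmaC_zero_zero N R
  | succ β ih =>
    rw [sigmaC_succ_succ]
    have h2 : sigmaC N R β (β + 1) = 0 := sigma_gt N R β (β + 1) (by omega)
    have h3 : ∀ α : Fin (β + 1),
        (if h : β + 1 ≤ (α : ℕ) ∧ (α : ℕ) < N - 1 ∧ β < N - 1 then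
          R ⟨α, h.2.1⟩ ⟨β, h.2.2⟩ * sigmaC N R α (β + 1)
        else 0) = 0 := by
      intro α
      rw [dif_neg]
      rintro ⟨h4, -⟩
      have := α.is_lt
      omega
    rw [Finset.sum_congr rfl fun α _ => h3 α]
    simp [h2, ih]

lemma sigma_hom (N k : ℕ) (R : Mat N) (hR : IsAdaptedConn N k R) :
    ∀ β γ : ℕ, IsHom N k (sigmaC N R β γ) (2 * ((β : ℤ) - (γ : ℤ))) := by
  intro β
  induction β using Nat.strong_induction_on with
  | _ β ih =>
    have hx0 : IsHom N k (X 0) (2 * ((N : ℤ) - (k : ℤ))) := by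
      have := isWeightedHomogeneous_X ℂ (wt N k) 0
      simpa [IsHom, wt] using this
    have hx1 : IsHom N k (X 1) 2 := by
      have := isWeightedHomogeneous_X ℂ (wt N k) 1
      simpa [IsHom, wt] using this
    have hsum : ∀ β' < β, ∀ γ : ℕ,
        IsHom N k
          (∑ α : Fin (β' + 1),
            (if h : γ ≤ (α : ℕ) ∧ (α : ℕ) < N - 1 ∧ β' < N - 1 then
              R ⟨α, h.2.1⟩ ⟨β', h.2.2⟩ * sigmaC N R α γ
            else 0))
          (2 * (((β' : ℤ) + 1) - (γ : ℤ))) := by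
      intro β' hβ' γ
      apply IsWeightedHomogeneous.sum
      intro α _
      by_cases hc : γ ≤ (α : ℕ) ∧ (α : ℕ) < N - 1 ∧ β' < N - 1
      · rw [dif_pos hc]
        have hr := hR.homog ⟨α, hc.2.1⟩ ⟨β', hc.2.2⟩
        have hs := ih α (lt_of_lt_of_le α.is_lt (by omega)) γ
        refine IsHom.of_eq (hr.mul hs) ?_
        simp only [Fin.val_mk]
        push_cast; ring
      · rw [dif_neg hc]
        exact isWeightedHomogeneous_zero _ _ _
    have hder : ∀ β' < β, ∀ γ : ℕ,
        IsHom N k (X 0 * X 1 * pderiv 0 (sigmaC N R β' γ)) (2 * (((β' : ℤ) + 1) - (γ : ℤ))) := by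
      intro β' hβ' γ
      have hd : IsHom N k (pderiv 0 (sigmaC N R β' γ))
          (2 * ((β' : ℤ) - (γ : ℤ)) - 2 * ((N : ℤ) - (k : ℤ))) := by
        have := pderiv_isHom 0 (ih β' hβ' γ)
        simpa [IsHom, wt] using this
      exact IsHom.of_eq ((hx0.mul hx1).mul hd) (by ring)
    match β with
    | 0 =>
      intro γ
      match γ with
      | 0 =>
        rw [sigmaC_zero_zero]
        exact IsHom.of_eq (isWeightedHomogeneous_one _ _) (by norm_num)
      | γ' + 1 =>
        rw [sigmaC_zero_succ]
        exact isWeightedHomogeneous_zero _ _ _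
    | β + 1 =>
      intro γ
      match γ with
      | 0 =>
        rw [sigmaC_succ_zero]
        refine IsHom.sub ?_ (IsHom.of_eq (hsum β (by omega) 0) (by push_cast; ring))
        refine IsWeightedHomogeneous.add (isWeightedHomogeneous_zero _ _ _) ?_
        exact IsHom.of_eq (hder β (by omega) 0) (by push_cast; ring)
      | γ' + 1 =>
        rw [sigmaC_succ_succ]
        refine IsHom.sub ?_
          (IsHom.of_eq (hsum β (by omega) (γ' + 1)) (by push_cast; ring))
        refine IsWeightedHomogeneous.add ?_
          (IsHom.of_eq (hder β (by omega) (γ' + 1)) (by push_cast; ring))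
        exact IsHom.of_eq (ih β (by omega) γ') (by push_cast; ring)

lemma sigma_q0 (N k : ℕ) (R : Mat N) (hR : IsAdaptedConn N k R) :
    ∀ β γ : ℕ, γ < β → q0 (sigmaC N R β γ) = 0 := by
  intro β
  induction β with
  | zero => omega
  | succ β ih =>
    intro γ hγ
    have hX0 : q0 (X 0 : PQH) = 0 := by simp [q0]
    have hC : ∀ γ' : ℕ, ∀ α : Fin (β + 1),
        q0 (if h : γ' ≤ (α : ℕ) ∧ (α : ℕ) < N - 1 ∧ β < N - 1 then
          R ⟨α, h.2.1⟩ ⟨β, h.2.2⟩ * sigmaC N R α γ'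
        else 0) = 0 := by
      intro γ' α
      by_cases hc : γ' ≤ (α : ℕ) ∧ (α : ℕ) < N - 1 ∧ β < N - 1
      · rw [dif_pos hc, _root_.map_mul]
        have hr : q0 (R ⟨α, hc.2.1⟩ ⟨β, hc.2.2⟩) = 0 := by
          have h5 := congrFun (congrFun hR.init ⟨α, hc.2.1⟩) ⟨β, hc.2.2⟩
          rw [Matrix.map_apply] at h5
          rw [h5, Im1, if_neg]
          simp only [Fin.val_mk]
          have := α.is_lt
          omega
        rw [hr, zero_mul]
      · rw [dif_neg hc, map_zero]
    match γ, hγ with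
    | 0, hγ =>
      rw [sigmaC_succ_zero, map_sub, map_add, map_sum,
        Finset.sum_congr rfl fun α _ => hC 0 α]
      simp [_root_.map_mul, hX0]
    | γ' + 1, hγ =>
      rw [sigmaC_succ_succ, map_sub, map_add, map_sum,
        Finset.sum_congr rfl fun α _ => hC (γ' + 1) α, ih γ' (by omega)]
      simp [_root_.map_mul, hX0]

/-- **Properties of the coefficients `σ_{β,γ}` of the reduction of an adapted system.**
For an adapted family `Ω = (1/h)R dt` and `0 ≤ γ ≤ β ≤ N−1`: `σ_{β,β} = 1`;
`σ_{β,γ}` is weighted-homogeneous of degree `2(β−γ)`; and `σ_{β,γ}(0,h) = 0` for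
`β > γ`. -/
theorem sigma_adapted
    (N k : ℕ) (hk : 2 ≤ k) (hNk : k < N)
    (R : Mat N) (hR : IsAdaptedConn N k R) :
    (∀ β ≤ N - 1, sigmaC N R β β = 1) ∧
    (∀ β ≤ N - 1, ∀ γ ≤ β, IsHom N k (sigmaC N R β γ) (2 * ((β : ℤ) - (γ : ℤ)))) ∧
    (∀ β ≤ N - 1, ∀ γ < β, q0 (sigmaC N R β γ) = 0) := by
  refine ⟨fun β _ => sigma_diag N R β,
    fun β _ γ _ => sigma_hom N k R hR β γ,
    fun β _ γ hγ => sigma_q0 N k R hR β γ hγ⟩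

end
end
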